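/- Let M ∈ ℕ, Δ ∈ ℂ, and k₁,…,k_M ∈ ℂ with G(a,b) := 1 + exp(i(k_a + k_b)) − 2Δ·exp(i k_a) nonzero for all a ≠ b in {1,…,M}. Define the amplitude A_M(P) := ε(P) · ∏_{1≤j<ℓ≤M} G(Pj, Pℓ)/G(j, ℓ). Then A_M satisfies the vanishing conditions: for every permutation Q of {1,…,M} and every j ∈ {1,…,M−1}, A_M(Q)·G(Q(j+1), Qj) + A_M(Q∘π_j)·G(Qj, Q(j+1)) = 0, where π_j is the transposition of j and j+1 and Q∘π_j applies π_j first (Appendix E.B: the Bethe ansatz amplitudes (E.18) satisfy conditions (E.14)). -/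

import Mathlib

open Finset

/-- `G(a,b) := 1 + exp(i(k_a + k_b)) − 2Δ·exp(i k_a)`. -/
noncomputable def Gfac (M : ℕ) (Δ : ℂ) (k : Fin M → ℂ) (a b : Fin M) : ℂ :=
  1 + Complex.exp (Complex.I * (k a + k b)) - 2 * Δ * Complex.exp (Complex.I * k a)

/-- The coordinate Bethe ansatz amplitude (E.18):
`A_M(P) = ε(P) · ∏_{j<ℓ} G(Pj, Pℓ)/G(j, ℓ)`. -/
noncomputable def ampXXZ (M : ℕ) (Δ : ℂ) (k : Fin M → ℂ) (P : Equiv.Perm (Fin M)) : ℂ :=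
  (Equiv.Perm.sign P : ℤ) *
    ∏ jl ∈ univ.filter (fun jl : Fin M × Fin M => jl.1 < jl.2),
      Gfac M Δ k (P jl.1) (P jl.2) / Gfac M Δ k jl.1 jl.2

/-!
Swapping two neighbours `j ⋖ j + 1` preserves the relative order of every pair of indices except
`(j, j + 1)` itself, so it permutes the remaining factors of `∏_{a<b} G(Qa, Qb)` and only turns
`G(Qj, Q(j+1))` into `G(Q(j+1), Qj)`. Together with the sign change of the transposition this
makes the two terms of the vanishing condition cancel; the denominator `∏_{a<b} G(a, b)` is common
to both terms and factors out.
-/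

namespace Equiv

variable {ι β : Type*} [LinearOrder ι] {a b : ι}

theorem swap_lt_swap_of_covBy (hab : a ⋖ b) {x y : ι} (hxy : x < y) (hne : (x, y) ≠ (a, b)) :
    swap a b x < swap a b y := by
  have hne' : x = a → y ≠ b := fun hx hy => hne (by rw [hx, hy])
  rcases eq_or_ne x a with rfl | hxa
  · have hyb := hne' rfl
    rw [swap_apply_left, swap_apply_of_ne_of_ne hxy.ne' hyb]
    exact lt_of_le_of_ne (hab.ge_of_gt hxy) hyb.symm
  rcases eq_or_ne x b with rfl | hxb
  · rw [swap_apply_right, swap_apply_of_ne_of_ne (hab.lt.trans hxy).ne' hxy.ne']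
    exact hab.lt.trans hxy
  rw [swap_apply_of_ne_of_ne hxa hxb]
  rcases eq_or_ne y a with rfl | hya
  · rw [swap_apply_left]
    exact hxy.trans hab.lt
  rcases eq_or_ne y b with rfl | hyb
  · rw [swap_apply_right]
    exact lt_of_le_of_ne (hab.le_of_lt hxy) hxa
  rwa [swap_apply_of_ne_of_ne hya hyb]

variable [Fintype ι] [CommMonoid β]

theorem prodMap_swap_mem_erase_lt_pairs (hab : a ⋖ b) {p : ι × ι}
    (hp : p ∈ (univ.filter fun p : ι × ι => p.1 < p.2).erase (a, b)) :
    Prod.map (swap a b) (swap a b) p ∈ (univ.filter fun p : ι × ι => p.1 < p.2).erase (a, b) := by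
  obtain ⟨hne, hlt⟩ := mem_erase.1 hp
  simp only [mem_filter, mem_univ, true_and] at hlt
  refine mem_erase.2 ⟨fun h => ?_, by simpa using swap_lt_swap_of_covBy hab hlt hne⟩
  have hp' : p = (b, a) := by
    simpa [Prod.ext_iff, swap_apply_eq_iff, swap_apply_left, swap_apply_right] using h
  exact (hp' ▸ hlt).not_gt hab.lt

theorem prod_lt_pairs_swap_mul_of_covBy (f : ι → ι → β) (hab : a ⋖ b) :
    (∏ p ∈ univ.filter (fun p : ι × ι => p.1 < p.2), f (swap a b p.1) (swap a b p.2)) * f a b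
      = (∏ p ∈ univ.filter (fun p : ι × ι => p.1 < p.2), f p.1 p.2) * f b a := by
  have hmem : (a, b) ∈ univ.filter (fun p : ι × ι => p.1 < p.2) := by simpa using hab.lt
  have hrest : ∏ p ∈ (univ.filter fun p : ι × ι => p.1 < p.2).erase (a, b),
        f (swap a b p.1) (swap a b p.2)
      = ∏ p ∈ (univ.filter fun p : ι × ι => p.1 < p.2).erase (a, b), f p.1 p.2 :=
    prod_nbij' (Prod.map (swap a b) (swap a b)) (Prod.map (swap a b) (swap a b))
      (fun _ => prodMap_swap_mem_erase_lt_pairs hab) (fun _ => prodMap_swap_mem_erase_lt_pairs hab)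
      (by simp) (by simp) (fun _ _ => rfl)
  rw [← mul_prod_erase _ _ hmem, ← mul_prod_erase _ _ hmem, hrest, swap_apply_left,
    swap_apply_right]
  dsimp only
  ac_rfl

end Equiv

theorem amp_vanishing_general (M : ℕ) (Δ : ℂ) (k : Fin M → ℂ)
    (Q : Equiv.Perm (Fin M)) (j : Fin M) (hj : (j : ℕ) + 1 < M) :
    ampXXZ M Δ k Q * Gfac M Δ k (Q ⟨(j : ℕ) + 1, hj⟩) (Q j)
      + ampXXZ M Δ k (Q * Equiv.swap j ⟨(j : ℕ) + 1, hj⟩) * Gfac M Δ k (Q j) (Q ⟨(j : ℕ) + 1, hj⟩)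
      = 0 := by
  have hcov : j ⋖ ⟨(j : ℕ) + 1, hj⟩ := Fin.covBy_iff.2 (Order.covBy_add_one _)
  have hprod := Equiv.prod_lt_pairs_swap_mul_of_covBy (fun a b => Gfac M Δ k (Q a) (Q b)) hcov
  simp only [ampXXZ, prod_div_distrib, Equiv.Perm.sign_mul, Equiv.Perm.sign_swap hcov.ne,
    Equiv.Perm.mul_apply] at hprod ⊢
  push_cast
  linear_combination -(Equiv.Perm.sign Q : ℂ) /
    (∏ p ∈ univ.filter (fun p : Fin M × Fin M => p.1 < p.2), Gfac M Δ k p.1 p.2) * hprod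

/-- Appendix E.B: the Bethe ansatz amplitudes (E.18) satisfy the vanishing conditions
(E.14): `A_M(Q)·G(Q(j+1), Qj) + A_M(Q∘π_j)·G(Qj, Q(j+1)) = 0` for every permutation `Q`
and adjacent transposition `π_j`. -/
theorem amp_vanishing (M : ℕ) (Δ : ℂ) (k : Fin M → ℂ)
    (hG : ∀ a b : Fin M, a ≠ b → Gfac M Δ k a b ≠ 0)
    (Q : Equiv.Perm (Fin M)) (j : Fin M) (hj : (j : ℕ) + 1 < M) :
    ampXXZ M Δ k Q * Gfac M Δ k (Q ⟨(j : ℕ) + 1, hj⟩) (Q j)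
      + ampXXZ M Δ k (Q * Equiv.swap j ⟨(j : ℕ) + 1, hj⟩) * Gfac M Δ k (Q j) (Q ⟨(j : ℕ) + 1, hj⟩)
      = 0 :=
  amp_vanishing_general M Δ k Q j hj
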